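/- Let V' ⊆ V and let ρ̃ denote associated densities with respect to the density-based decomposition of V'. If an element u ∈ V' is deleted from V', then for every v ∈ V, ρ̃^new_M(v) ≤ ρ̃^old_M(v), and moreover ρ̃^old_M(u) − 1 ≤ ρ̃^new_M(u) ≤ ρ̃^old_M(u). -/

import Mathlib

open Matroid Set ENNReal

namespace MatroidDCS

variable {α : Type*}

/-- The rank of a set in a matroid: supremum of sizes of independent subsets. -/
noncomputable def er (M : Matroid α) (X : Set α) : ℕ∞ :=
  ⨆ I ∈ {I : Set α | M.Indep I ∧ I ⊆ X}, I.encard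

/-- Contraction of a matroid by a set, defined via the dual. -/
noncomputable def contract (M : Matroid α) (C : Set α) : Matroid α := (M✶ ↾ (M.E \ C))✶

/-- A matroid has no loops: every singleton of the ground set is independent. -/
def Loopless (M : Matroid α) : Prop := ∀ v ∈ M.E, M.Indep {v}

/-- Density of a set in a matroid, valued in `ℝ≥0∞` (so `∅` has density 0 and a
nonempty set of rank 0 has density `⊤`). -/
noncomputable def dens (M : Matroid α) (U : Set α) : ℝ≥0∞ :=
  (U.encard : ℝ≥0∞) / (er M U : ℝ≥0∞)

/-- Union of the first `j` pieces of a decomposition. -/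
def pre (U : ℕ → Set α) (j : ℕ) : Set α := ⋃ i ∈ Finset.range j, U i

/-- `W` is the maximum-cardinality densest subset of `M`. -/
def IsMaxDensest (M : Matroid α) (W : Set α) : Prop :=
  W ⊆ M.E ∧ (∀ X ⊆ M.E, dens M X ≤ dens M W) ∧
    ∀ X ⊆ M.E, dens M X = dens M W → X.encard ≤ W.encard

/-- `U 0, …, U (k-1)` is the greedy density-based decomposition of the ground set of `M'`. -/
structure IsDensityDecomp (M' : Matroid α) (k : ℕ) (U : ℕ → Set α) : Prop where
  cover : pre U k = M'.E
  densest : ∀ j < k, IsMaxDensest (contract M' (pre U j)) (U j)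

open Classical in
/-- Associated density of an element `v` with respect to the decomposition `U` of `V'`. -/
noncomputable def assocDens (M : Matroid α) (V' : Set α) (k : ℕ) (U : ℕ → Set α) (v : α) :
    ℝ≥0∞ :=
  if h : ∃ j, j < k ∧ v ∈ M.closure (pre U (j + 1)) then
    dens (contract (M ↾ V') (pre U (Nat.find h))) (U (Nat.find h))
  else 0

/-- Size of a maximum common independent set within `S`. -/
noncomputable def mu (M₁ M₂ : Matroid α) (S : Set α) : ℕ∞ :=
  ⨆ I ∈ {I : Set α | I ⊆ S ∧ M₁.Indep I ∧ M₂.Indep I}, I.encard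


section erBasic

variable {M : Matroid α} {X Y Z C I J B : Set α} {e : α} {c : ℕ∞}

lemma le_er (hI : M.Indep I) (hIX : I ⊆ X) : I.encard ≤ er M X :=
  le_iSup₂_of_le I ⟨hI, hIX⟩ le_rfl

lemma er_le (h : ∀ I, M.Indep I → I ⊆ X → I.encard ≤ c) : er M X ≤ c :=
  iSup₂_le fun I hI => h I hI.1 hI.2

lemma er_le_encard : er M X ≤ X.encard := er_le fun _ _ h => encard_mono h

lemma er_mono (h : X ⊆ Y) : er M X ≤ er M Y := er_le fun _ hI hIX => le_er hI (hIX.trans h)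

lemma Basis'_er (h : M.IsBasis' I X) : er M X = I.encard := by
  refine le_antisymm (er_le fun J hJ hJX => ?_) (le_er h.indep h.subset)
  obtain ⟨J', hJ', hJJ'⟩ := hJ.subset_isBasis'_of_subset hJX
  exact (encard_mono hJJ').trans (hJ'.encard_eq_encard h).le

lemma Basis_er (h : M.IsBasis I X) : er M X = I.encard := Basis'_er h.isBasis'

lemma Indep_er (h : M.Indep I) : er M I = I.encard := Basis_er h.isBasis_self

@[simp] lemma er_empty : er M (∅ : Set α) = 0 :=
  le_antisymm (er_le_encard.trans (by simp)) zero_le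

lemma er_ne_top [M.Finite] : er M X ≠ ⊤ := by
  have h1 : er M X ≤ (M.E).encard :=
    er_le fun I hI _ => encard_mono hI.subset_ground
  exact fun h => by simp [h, M.ground_finite.encard_lt_top.ne] at h1

lemma er_union_eq_of_subset_closure (hX : X ⊆ M.E) (hY : Y ⊆ M.closure X) :
    er M (X ∪ Y) = er M X := by
  obtain ⟨I, hI⟩ := M.exists_isBasis X hX
  have h1 : er M (M.closure X) = I.encard := Basis_er hI.isBasis_closure_right
  refine le_antisymm ?_ (er_mono subset_union_left)
  refine le_trans (er_mono (union_subset (M.subset_closure X hX) hY)) ?_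
  rw [h1, Basis_er hI]

lemma er_insert_le : er M (insert e X) ≤ er M X + 1 := by
  refine er_le fun J hJ hJX => ?_
  have h1 : J ⊆ insert e (J \ {e}) := by
    intro x hx
    rcases eq_or_ne x e with rfl | hne
    · exact mem_insert _ _
    · exact mem_insert_of_mem _ ⟨hx, hne⟩
  refine le_trans (encard_mono h1) ?_
  refine le_trans (encard_insert_le _ _) ?_
  exact add_le_add_left (le_er (hJ.subset diff_subset) (fun x hx => by
    have := hJX hx.1
    rcases this with h | h
    · exact absurd h hx.2
    · exact h)) 1

lemma er_insert_of_not_mem_closure (hX : X ⊆ M.E) (he : e ∈ M.E)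
    (h : e ∉ M.closure X) : er M (insert e X) = er M X + 1 := by
  obtain ⟨I, hI⟩ := M.exists_isBasis X hX
  have hcl : M.closure I = M.closure X := hI.closure_eq_closure
  have heI : e ∉ I := fun heI => h (hcl ▸ M.mem_closure_of_mem heI hI.indep.subset_ground)
  have hins : M.Indep (insert e I) := by
    rw [hI.indep.insert_indep_iff_of_notMem heI, hcl]
    exact ⟨he, h⟩
  have h2 : (insert e I).encard ≤ er M (insert e X) :=
    le_er hins (insert_subset_insert hI.subset)
  refine le_antisymm er_insert_le ?_
  calc er M X + 1 = I.encard + 1 := by rw [Basis_er hI]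
    _ = (insert e I).encard := (encard_insert_of_notMem heI).symm
    _ ≤ er M (insert e X) := h2

lemma one_le_er_of_not_mem_closure (hZ : Z ⊆ M.E) (he : e ∈ M.E) (heZ : e ∉ M.closure Z)
    (heX : e ∈ X) : er M Z + 1 ≤ er M (X ∪ Z) := by
  rw [← er_insert_of_not_mem_closure hZ he heZ]
  exact er_mono (insert_subset (Or.inl heX) subset_union_right)

lemma not_mem_closure_empty (hM : Loopless M) (he : e ∈ M.E) : e ∉ M.closure (∅ : Set α) := by
  intro hc
  have h1 : er M ((∅ : Set α) ∪ {e}) = er M ∅ :=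
    er_union_eq_of_subset_closure (empty_subset _) (singleton_subset_iff.mpr hc)
  rw [empty_union, Indep_er (hM e he), er_empty, encard_singleton] at h1
  exact one_ne_zero h1

lemma er_submod (hX : X ⊆ M.E) (hY : Y ⊆ M.E) :
    er M (X ∪ Y) + er M (X ∩ Y) ≤ er M X + er M Y := by
  obtain ⟨I, hI⟩ := M.exists_isBasis (X ∩ Y) ((inter_subset_left).trans hX)
  obtain ⟨J, hJ, hJI⟩ := hI.exists_isBasis_inter_eq_of_superset
    ((inter_subset_left).trans subset_union_left) (union_subset hX hY)
  have h1 : er M (X ∪ Y) = J.encard := Basis_er hJ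
  have h2 : er M (X ∩ Y) = I.encard := Basis_er hI
  have h3 : (J ∩ X).encard ≤ er M X := le_er (hJ.indep.subset inter_subset_left) inter_subset_right
  have h4 : (J ∩ Y).encard ≤ er M Y := le_er (hJ.indep.subset inter_subset_left) inter_subset_right
  have h5 : (J ∩ X) ∪ (J ∩ Y) = J := by
    rw [← inter_union_distrib_left]; exact inter_eq_left.mpr hJ.subset
  have h6 : (J ∩ X) ∩ (J ∩ Y) = I := by
    rw [← hJI]; ext x; simp only [mem_inter_iff, mem_setOf_eq]; tauto
  have h7 := encard_union_add_encard_inter (J ∩ X) (J ∩ Y)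
  rw [h5, h6] at h7
  calc er M (X ∪ Y) + er M (X ∩ Y) = (J ∩ X).encard + (J ∩ Y).encard := by
        rw [h1, h2, ← h7]
    _ ≤ er M X + er M Y := add_le_add h3 h4

lemma er_restrict (hXR : X ⊆ C) : er (M ↾ C) X = er M X := by
  unfold er
  apply le_antisymm <;> refine iSup₂_le fun I hI => le_iSup₂_of_le I ?_ le_rfl
  · exact ⟨(restrict_indep_iff.mp hI.1).1, hI.2⟩
  · exact ⟨restrict_indep_iff.mpr ⟨hI.1, hI.2.trans hXR⟩, hI.2⟩

end erBasic


section dualContract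

variable {M : Matroid α} {X Y Z C : Set α}

lemma encard_ne_top [M.Finite] (hX : X ⊆ M.E) : X.encard ≠ ⊤ :=
  (M.set_finite X hX).encard_lt_top.ne

lemma er_ne_top_of_subset [M.Finite] {N : Matroid α} (hX : X ⊆ M.E) : er N X ≠ ⊤ := fun h => by
  have h2 := er_le_encard (M := N) (X := X)
  rw [h] at h2
  exact (encard_ne_top hX) (top_le_iff.mp h2)

/-- Dual rank identity. -/
lemma er_dual_add [M.Finite] (hX : X ⊆ M.E) :
    er M✶ X + er M M.E = X.encard + er M (M.E \ X) := by
  obtain ⟨J, hJ⟩ := M.exists_isBasis (M.E \ X) diff_subset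
  obtain ⟨B, hB, hJB⟩ := hJ.indep.exists_isBase_superset
  have hBXsub : B \ X ⊆ M.E \ X := fun x hx => ⟨hB.subset_ground hx.1, hx.2⟩
  have hBX : J = B \ X :=
    hJ.eq_of_subset_indep (hB.indep.subset diff_subset)
      (fun x hx => ⟨hJB hx, (hJ.subset hx).2⟩) hBXsub
  have hE : er M M.E = B.encard := Basis_er hB.isBasis_ground
  have hEX : er M (M.E \ X) = (B \ X).encard := by rw [Basis_er hJ, hBX]
  have hdual : er M✶ X = (X \ B).encard := by
    refine le_antisymm (er_le fun I hI hIX => ?_) ?_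
    · obtain ⟨hIE, B', hB', hdisj⟩ := dual_indep_iff_exists'.mp hI
      have h0 : I.encard ≤ (X \ B').encard :=
        encard_mono fun x hx => ⟨hIX hx, fun hxB => hdisj.ne_of_mem hx hxB rfl⟩
      have h1 : (B' \ X).encard ≤ (B \ X).encard := by
        rw [← hEX]
        exact le_er (hB'.indep.subset diff_subset) (fun x hx => ⟨hB'.subset_ground hx.1, hx.2⟩)
      have h2 : (B \ X).encard + (B ∩ X).encard = (B' \ X).encard + (B' ∩ X).encard := by
        rw [encard_diff_add_encard_inter, encard_diff_add_encard_inter]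
        exact hB.encard_eq_encard_of_isBase hB'
      have h4 : (X \ B').encard + (X ∩ B').encard = (X \ B).encard + (X ∩ B).encard := by
        rw [encard_diff_add_encard_inter, encard_diff_add_encard_inter]
      have h6 : (X ∩ B').encard = (B' ∩ X).encard := by rw [inter_comm]
      have h7 : (X ∩ B).encard = (B ∩ X).encard := by rw [inter_comm]
      lift I.encard to ℕ using encard_ne_top hIE with n0
      lift (X \ B').encard to ℕ using encard_ne_top (diff_subset.trans hX) with n1
      lift (B' \ X).encard to ℕ using encard_ne_top (diff_subset.trans hB'.subset_ground) with n2
      lift (B \ X).encard to ℕ using encard_ne_top (diff_subset.trans hB.subset_ground) with n3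
      lift (B ∩ X).encard to ℕ using encard_ne_top (inter_subset_right.trans hX) with n4
      lift (B' ∩ X).encard to ℕ using encard_ne_top (inter_subset_right.trans hX) with n5
      lift (X ∩ B').encard to ℕ using encard_ne_top (inter_subset_left.trans hX) with n6
      lift (X ∩ B).encard to ℕ using encard_ne_top (inter_subset_left.trans hX) with n7
      lift (X \ B).encard to ℕ using encard_ne_top (diff_subset.trans hX) with n8
      norm_cast at h0 h1 h2 h4 h6 h7 ⊢
      omega
    · refine le_er ?_ diff_subset
      exact dual_indep_iff_exists'.mpr ⟨diff_subset.trans hX, B, hB, disjoint_sdiff_left⟩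
  rw [hdual, hE, hEX]
  have e1 : (X \ B).encard + (X ∩ B).encard = X.encard := encard_diff_add_encard_inter X B
  have e2 : (B \ X).encard + (B ∩ X).encard = B.encard := encard_diff_add_encard_inter B X
  rw [← e1, ← e2, inter_comm B X]
  ring

@[simp] lemma contract_ground : (contract M C).E = M.E \ C := rfl

lemma matroid_finite_of_subset (N : Matroid α) [M.Finite] (h : N.E ⊆ M.E) : N.Finite :=
  ⟨M.ground_finite.subset h⟩

/-- Contraction rank identity. -/
lemma er_contract_add [M.Finite] (hC : C ⊆ M.E) (hX : X ⊆ M.E \ C) :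
    er (contract M C) X + er M C = er M (X ∪ C) := by
  set N := M✶ ↾ (M.E \ C) with hN
  have hNE : N.E = M.E \ C := rfl
  haveI : N.Finite := matroid_finite_of_subset (M := M) N (by rw [hNE]; exact diff_subset)
  haveI : M✶.Finite := matroid_finite_of_subset (M := M) M✶ subset_rfl
  have hA : er N✶ X + er N N.E = X.encard + er N (N.E \ X) :=
    er_dual_add (by rw [hNE]; exact hX)
  have hrestr : ∀ Y : Set α, Y ⊆ M.E \ C → er N Y = er M✶ Y := fun Y hY => er_restrict hY
  have hY1sub : (M.E \ C) \ X ⊆ M.E := diff_subset.trans diff_subset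
  have hB : er M✶ ((M.E \ C) \ X) + er M M.E
      = ((M.E \ C) \ X).encard + er M (M.E \ ((M.E \ C) \ X)) := er_dual_add hY1sub
  have hCid : er M✶ (M.E \ C) + er M M.E = (M.E \ C).encard + er M (M.E \ (M.E \ C)) :=
    er_dual_add diff_subset
  have hset1 : M.E \ ((M.E \ C) \ X) = X ∪ C := by
    ext x
    simp only [mem_diff, mem_union]
    constructor
    · rintro ⟨h1, h2⟩
      by_cases hxC : x ∈ C
      · exact Or.inr hxC
      · left; by_contra hxX; exact h2 ⟨⟨h1, hxC⟩, hxX⟩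
    · rintro (hx | hx)
      · exact ⟨(hX hx).1, fun h2 => h2.2 hx⟩
      · exact ⟨hC hx, fun h2 => h2.1.2 hx⟩
  have hset2 : M.E \ (M.E \ C) = C := by rw [diff_diff_cancel_left hC]
  rw [hset1] at hB
  rw [hset2] at hCid
  rw [hNE] at hA
  rw [hrestr (M.E \ C) subset_rfl, hrestr ((M.E \ C) \ X) diff_subset] at hA
  have f1 : er M M.E ≠ ⊤ := er_ne_top
  have f3 : ((M.E \ C)).encard ≠ ⊤ := encard_ne_top diff_subset
  have f4 : er N✶ X ≠ ⊤ := er_ne_top_of_subset (hX.trans diff_subset)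
  have f5 : er M C ≠ ⊤ := er_ne_top
  have f6 : er M (X ∪ C) ≠ ⊤ := er_ne_top
  have f7 : er M✶ (M.E \ C) ≠ ⊤ := er_ne_top_of_subset diff_subset
  have f8 : X.encard ≠ ⊤ := encard_ne_top (hX.trans diff_subset)
  have f9 : ((M.E \ C) \ X).encard ≠ ⊤ := encard_ne_top hY1sub
  have f2 : er M✶ ((M.E \ C) \ X) ≠ ⊤ := er_ne_top_of_subset hY1sub
  have hcard : ((M.E \ C) \ X).encard + X.encard = (M.E \ C).encard :=
    encard_diff_add_encard_of_subset hX
  have hgoal : contract M C = N✶ := rfl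
  rw [hgoal]
  lift er N✶ X to ℕ using f4 with a
  lift er M C to ℕ using f5 with b
  lift er M (X ∪ C) to ℕ using f6 with c
  lift er M✶ (M.E \ C) to ℕ using f7 with d
  lift er M✶ ((M.E \ C) \ X) to ℕ using f2 with ee
  lift er M M.E to ℕ using f1 with f
  lift X.encard to ℕ using f8 with p
  lift ((M.E \ C) \ X).encard to ℕ using f9 with q
  lift (M.E \ C).encard to ℕ using f3 with r0
  norm_cast at hA hB hCid hcard ⊢
  omega

end dualContract

section decomp

variable {M : Matroid α} {V'' C X Y Z : Set α} {k : ℕ} {U : ℕ → Set α} {v y : α}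

lemma toENNReal_ne_top {x : ℕ∞} (h : x ≠ ⊤) : (x : ℝ≥0∞) ≠ ⊤ := fun hc => by
  rw [← ENat.toENNReal_top] at hc
  exact h (ENat.toENNReal_strictMono.injective hc)

lemma toENNReal_ne_zero {x : ℕ∞} (h : 1 ≤ x) : (x : ℝ≥0∞) ≠ 0 := by
  have : ((1 : ℕ∞) : ℝ≥0∞) ≤ (x : ℝ≥0∞) := ENat.toENNReal_le.mpr h
  rw [ENat.toENNReal_one] at this
  exact fun hc => by rw [hc] at this; exact (not_le.mpr zero_lt_one) this

@[simp] lemma pre_zero : pre U 0 = ∅ := by ext x; simp [pre]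

lemma pre_succ (j : ℕ) : pre U (j + 1) = pre U j ∪ U j := by
  simp only [pre, Finset.range_add_one, Finset.set_biUnion_insert]
  rw [union_comm]

lemma pre_monotone {i j : ℕ} (h : i ≤ j) : pre U i ⊆ pre U j := by
  intro x hx
  simp only [pre, mem_iUnion, Finset.mem_range, exists_prop] at hx ⊢
  obtain ⟨i', hi', hxi⟩ := hx
  exact ⟨i', lt_of_lt_of_le hi' h, hxi⟩

lemma decomp_part_subset (hD : IsDensityDecomp (M ↾ V'') k U) {j : ℕ} (hj : j < k) :
    U j ⊆ V'' \ pre U j := by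
  have := (hD.densest j hj).1
  rwa [contract_ground, restrict_ground_eq] at this

lemma decomp_pre_subset (hD : IsDensityDecomp (M ↾ V'') k U) {j : ℕ} (hj : j ≤ k) :
    pre U j ⊆ V'' := by
  refine (pre_monotone hj).trans ?_
  rw [hD.cover, restrict_ground_eq]

/-- Rank identity for contractions of the restriction, in terms of `M`. -/
lemma er_contract_restrict [M.Finite] (hV : V'' ⊆ M.E) (hC : C ⊆ V'') (hX : X ⊆ V'' \ C) :
    er (contract (M ↾ V'') C) X + er M C = er M (X ∪ C) := by
  haveI : (M ↾ V'').Finite := matroid_finite_of_subset (M := M) _ (by rw [restrict_ground_eq]; exact hV)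
  have h := er_contract_add (M := M ↾ V'') (C := C) (X := X)
    (by rw [restrict_ground_eq]; exact hC) (by rw [restrict_ground_eq]; exact hX)
  rwa [er_restrict hC, er_restrict (union_subset (hX.trans diff_subset) hC)] at h

lemma one_le_er_contract [M.Finite] (hV : V'' ⊆ M.E) (hC : C ⊆ V'') (hY : Y ⊆ V'' \ C)
    (hy : y ∈ Y) (hycl : y ∉ M.closure C) : 1 ≤ er (contract (M ↾ V'') C) Y := by
  have h1 := er_contract_restrict hV hC hY
  have h2 : er M C + 1 ≤ er M (Y ∪ C) :=
    one_le_er_of_not_mem_closure (hC.trans hV) (hV ((hY hy).1)) hycl hy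
  rw [← h1, add_comm (er M C) 1] at h2
  exact (WithTop.add_le_add_iff_right (er_ne_top (M := M))).mp h2

/-- All parts of a density decomposition are closed: elements outside a prefix are
not spanned by it. -/
lemma decomp_closed [M.Finite] (hM : Loopless M) (hV : V'' ⊆ M.E)
    (hD : IsDensityDecomp (M ↾ V'') k U) :
    ∀ j, j ≤ k → ∀ v, v ∈ V'' → v ∉ pre U j → v ∉ M.closure (pre U j) := by
  intro j
  induction j with
  | zero => intro _ v hv _; rw [pre_zero]; exact not_mem_closure_empty hM (hV hv)
  | succ j ih =>
    intro hjk v hv hvp hvcl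
    have hjk' : j < k := hjk
    obtain ⟨hWsub, hmax, hcard⟩ := hD.densest j hjk'
    set N := contract (M ↾ V'') (pre U j) with hNdef
    set W := U j with hW
    have hWsub' : W ⊆ V'' \ pre U j := decomp_part_subset hD hjk'
    have hpre : pre U j ⊆ V'' := decomp_pre_subset hD hjk'.le
    have hpre1 : pre U (j+1) ⊆ V'' := decomp_pre_subset hD hjk
    have hvP : v ∉ pre U j := fun h => hvp (pre_monotone (Nat.le_succ j) h)
    -- v is a "loop-like" addition : er N (W ∪ {v}) = er N W
    have hins : er M (pre U (j+1) ∪ {v}) = er M (pre U (j+1)) :=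
      er_union_eq_of_subset_closure (hpre1.trans hV) (singleton_subset_iff.mpr hvcl)
    have h1 : er N (W ∪ {v}) + er M (pre U j) = er M ((W ∪ {v}) ∪ pre U j) :=
      er_contract_restrict hV hpre
        (union_subset hWsub' (singleton_subset_iff.mpr ⟨hv, hvP⟩))
    have h2 : er N W + er M (pre U j) = er M (W ∪ pre U j) :=
      er_contract_restrict hV hpre hWsub'
    have hs1 : (W ∪ {v}) ∪ pre U j = pre U (j+1) ∪ {v} := by
      rw [pre_succ]; ac_rfl
    have hs2 : W ∪ pre U j = pre U (j+1) := by rw [pre_succ]; ac_rfl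
    rw [hs1, hins, ← hs2, ← h2] at h1
    have her : er N (W ∪ {v}) = er N W :=
      WithTop.add_right_cancel (er_ne_top (M := M)) h1
    -- densities
    have hle : dens N W ≤ dens N (W ∪ {v}) := by
      unfold dens
      rw [her]
      exact ENNReal.div_le_div_right (ENat.toENNReal_le.mpr (encard_mono subset_union_left)) _
    have hge : dens N (W ∪ {v}) ≤ dens N W := by
      apply hmax
      rw [hNdef, contract_ground, restrict_ground_eq]
      exact union_subset hWsub' (singleton_subset_iff.mpr ⟨hv, hvP⟩)
    have heq : dens N (W ∪ {v}) = dens N W := le_antisymm hge hle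
    have hcard' : (W ∪ {v}).encard ≤ W.encard := by
      apply hcard
      · rw [hNdef, contract_ground, restrict_ground_eq]
        exact union_subset hWsub' (singleton_subset_iff.mpr ⟨hv, hvP⟩)
      · exact heq
    have hvW : v ∉ W := fun h => hvp (by rw [pre_succ]; exact Or.inr h)
    have : W.encard + 1 ≤ W.encard := by
      calc W.encard + 1 = (insert v W).encard := (encard_insert_of_notMem hvW).symm
        _ = (W ∪ {v}).encard := by rw [union_singleton]
        _ ≤ W.encard := hcard'
    have hfin : W.encard ≠ ⊤ := encard_ne_top ((hWsub'.trans diff_subset).trans hV)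
    lift W.encard to ℕ using hfin with n
    norm_cast at this
    omega

end decomp


section densityLemmas

variable {M : Matroid α} {V'' C X Y Z : Set α} {k : ℕ} {U : ℕ → Set α} {v y : α}

lemma er_contract_ne_top [M.Finite] {N : Matroid α} (hX : X ⊆ M.E) : er N X ≠ ⊤ :=
  er_ne_top_of_subset hX

lemma partDens_ne_top [M.Finite] (hM : Loopless M) (hV : V'' ⊆ M.E)
    (hD : IsDensityDecomp (M ↾ V'') k U) {j : ℕ} (hj : j < k) :
    dens (contract (M ↾ V'') (pre U j)) (U j) ≠ ⊤ := by
  by_cases hU : U j = ∅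
  · rw [dens, hU, encard_empty]
    simp
  · obtain ⟨y, hy⟩ := nonempty_iff_ne_empty.mpr hU
    have hWsub := decomp_part_subset hD hj
    have hycl : y ∉ M.closure (pre U j) :=
      decomp_closed hM hV hD j hj.le y (hWsub hy).1 (hWsub hy).2
    have h1 : 1 ≤ er (contract (M ↾ V'') (pre U j)) (U j) :=
      one_le_er_contract hV (decomp_pre_subset hD hj.le) hWsub hy hycl
    rw [dens, Ne, ENNReal.div_eq_top]
    rintro (⟨-, h0⟩ | ⟨ht, -⟩)
    · exact toENNReal_ne_zero h1 h0
    · exact toENNReal_ne_top (encard_ne_top ((hWsub.trans diff_subset).trans hV)) ht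

lemma partDens_succ_le [M.Finite] (hM : Loopless M) (hV : V'' ⊆ M.E)
    (hD : IsDensityDecomp (M ↾ V'') k U) {j : ℕ} (hj : j + 1 < k) :
    dens (contract (M ↾ V'') (pre U (j+1))) (U (j+1))
      ≤ dens (contract (M ↾ V'') (pre U j)) (U j) := by
  have hjk : j < k := by omega
  obtain ⟨hWsub0, hmax, -⟩ := hD.densest j hjk
  have hW1sub : U (j+1) ⊆ V'' \ pre U (j+1) := decomp_part_subset hD hj
  have hWsub : U j ⊆ V'' \ pre U j := decomp_part_subset hD hjk
  by_cases hU1 : U (j+1) = ∅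
  · rw [dens, hU1, encard_empty]
    simp
  by_cases hU : U j = ∅
  · have hpp : pre U (j+1) = pre U j := by rw [pre_succ, hU, union_empty]
    rw [hpp]
    apply hmax
    rw [contract_ground, restrict_ground_eq]
    exact fun x hx => by have := hW1sub hx; rw [hpp] at this; exact this
  -- main case
  obtain ⟨y1, hy1⟩ := nonempty_iff_ne_empty.mpr hU1
  obtain ⟨y0, hy0⟩ := nonempty_iff_ne_empty.mpr hU
  set N0 := contract (M ↾ V'') (pre U j) with hN0
  set N1 := contract (M ↾ V'') (pre U (j+1)) with hN1
  have hr1 : 1 ≤ er N0 (U j) :=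
    one_le_er_contract hV (decomp_pre_subset hD hjk.le) hWsub hy0
      (decomp_closed hM hV hD j hjk.le y0 (hWsub hy0).1 (hWsub hy0).2)
  have hs1 : 1 ≤ er N1 (U (j+1)) :=
    one_le_er_contract hV (decomp_pre_subset hD hj.le) hW1sub hy1
      (decomp_closed hM hV hD (j+1) hj.le y1 (hW1sub hy1).1 (hW1sub hy1).2)
  have hXsub : U j ∪ U (j+1) ⊆ V'' \ pre U j := by
    refine union_subset hWsub fun x hx => ?_
    have := hW1sub hx
    exact ⟨this.1, fun hc => this.2 (pre_monotone (Nat.le_succ j) hc)⟩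
  -- rank of the union in N0 equals sum
  have h1 : er N0 (U j ∪ U (j+1)) + er M (pre U j) = er M ((U j ∪ U (j+1)) ∪ pre U j) :=
    er_contract_restrict hV (decomp_pre_subset hD hjk.le) hXsub
  have h2 : er N1 (U (j+1)) + er M (pre U (j+1)) = er M (U (j+1) ∪ pre U (j+1)) :=
    er_contract_restrict hV (decomp_pre_subset hD hj.le) hW1sub
  have h3 : er N0 (U j) + er M (pre U j) = er M (U j ∪ pre U j) :=
    er_contract_restrict hV (decomp_pre_subset hD hjk.le) hWsub
  have hs2 : U j ∪ pre U j = pre U (j+1) := by rw [pre_succ]; ac_rfl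
  have hs3 : (U j ∪ U (j+1)) ∪ pre U j = U (j+1) ∪ pre U (j+1) := by
    rw [pre_succ]; ac_rfl
  rw [hs3] at h1
  rw [← h2] at h1
  rw [hs2] at h3
  have hsum : er N0 (U j ∪ U (j+1)) = er N1 (U (j+1)) + er N0 (U j) := by
    rw [← h3] at h1
    have h1' : er N0 (U j ∪ U (j+1)) + er M (pre U j)
        = (er N1 (U (j+1)) + er N0 (U j)) + er M (pre U j) := by
      rw [h1]; ring
    exact WithTop.add_right_cancel (er_ne_top (M := M)) h1'
  have hcards : (U j ∪ U (j+1)).encard = (U j).encard + (U (j+1)).encard := by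
    refine encard_union_eq (disjoint_left.mpr fun x hx hx1 => ?_)
    exact (hW1sub hx1).2 (by rw [pre_succ]; exact Or.inr hx)
  -- density comparison
  have hdle : dens N0 (U j ∪ U (j+1)) ≤ dens N0 (U j) := by
    apply hmax
    rw [hN0, contract_ground, restrict_ground_eq]
    exact hXsub
  -- cross multiply
  set A := ((U j).encard : ℝ≥0∞) with hA
  set B := ((U (j+1)).encard : ℝ≥0∞) with hB
  set R := ((er N0 (U j) : ℕ∞) : ℝ≥0∞) with hR
  set S := ((er N1 (U (j+1)) : ℕ∞) : ℝ≥0∞) with hS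
  have hRne0 : R ≠ 0 := toENNReal_ne_zero hr1
  have hSne0 : S ≠ 0 := toENNReal_ne_zero hs1
  have hRnetop : R ≠ ⊤ :=
    toENNReal_ne_top (er_contract_ne_top ((hWsub.trans diff_subset).trans hV))
  have hSnetop : S ≠ ⊤ :=
    toENNReal_ne_top (er_contract_ne_top ((hW1sub.trans diff_subset).trans hV))
  have hAnetop : A ≠ ⊤ := toENNReal_ne_top (encard_ne_top ((hWsub.trans diff_subset).trans hV))
  have hARnetop : A / R ≠ ⊤ := by
    rw [Ne, ENNReal.div_eq_top]
    rintro (⟨-, h0⟩ | ⟨ht, -⟩)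
    · exact hRne0 h0
    · exact hAnetop ht
  have hdle' : (A + B) / (R + S) ≤ A / R := by
    have e1 : dens N0 (U j ∪ U (j+1)) = (A + B) / (S + R) := by
      rw [dens, hcards, hsum]
      rw [ENat.toENNReal_add, ENat.toENNReal_add]
    have e2 : dens N0 (U j) = A / R := rfl
    rw [e1, e2, add_comm S R] at hdle
    exact hdle
  have hRS : R + S ≠ ⊤ := ENNReal.add_ne_top.mpr ⟨hRnetop, hSnetop⟩
  have h4 : A + B ≤ (A / R) * (R + S) :=
    (ENNReal.div_le_iff_le_mul (Or.inr hARnetop) (Or.inl hRS)).mp hdle'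
  have h5 : (A / R) * (R + S) = A + (A / R) * S := by
    rw [mul_add, ENNReal.div_mul_cancel hRne0 hRnetop]
  rw [h5] at h4
  have h6 : B ≤ (A / R) * S := (ENNReal.add_le_add_iff_left hAnetop).mp h4
  show B / S ≤ A / R
  exact (ENNReal.div_le_iff_le_mul (Or.inl hSne0) (Or.inl hSnetop)).mpr h6

lemma partDens_anti [M.Finite] (hM : Loopless M) (hV : V'' ⊆ M.E)
    (hD : IsDensityDecomp (M ↾ V'') k U) {s t : ℕ} (hst : s ≤ t) (ht : t < k) :
    dens (contract (M ↾ V'') (pre U t)) (U t) ≤ dens (contract (M ↾ V'') (pre U s)) (U s) := by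
  obtain ⟨n, rfl⟩ := Nat.exists_eq_add_of_le hst
  clear hst
  induction n with
  | zero => exact le_rfl
  | succ n ih =>
    have h1 : s + n < k := by omega
    have step := partDens_succ_le hM hV hD (j := s + n) (by omega)
    exact le_trans (by rw [show s + (n+1) = s + n + 1 by omega] at *; exact step) (ih h1)

/-- The inductive step of the key counting claim. -/
lemma claim2_step [M.Finite] (hM : Loopless M) (hV : V'' ⊆ M.E)
    (hD : IsDensityDecomp (M ↾ V'') k U) {lam : ℝ≥0∞} (hlam : lam ≠ ⊤)
    {t : ℕ} (ht : t < k)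
    (hle : lam ≤ dens (contract (M ↾ V'') (pre U t)) (U t))
    {Z' : Set α} (hZ' : Z' ⊆ M.E) (hPZ : pre U t ⊆ Z') :
    lam * ↑(er M (U t ∪ Z')) ≤ ↑((U t \ M.closure Z').encard) + lam * ↑(er M Z') := by
  set W := U t with hWdef
  by_cases hW : W = ∅
  · rw [hW, empty_union, empty_diff, encard_empty]
    simp
  set N := contract (M ↾ V'') (pre U t) with hN
  set e := dens N W with he
  have hWsub : W ⊆ V'' \ pre U t := decomp_part_subset hD ht
  have hWE : W ⊆ M.E := (hWsub.trans diff_subset).trans hV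
  have hpre : pre U t ⊆ V'' := decomp_pre_subset hD ht.le
  obtain ⟨y, hy⟩ := nonempty_iff_ne_empty.mpr hW
  have hycl : y ∉ M.closure (pre U t) :=
    decomp_closed hM hV hD t ht.le y (hWsub hy).1 (hWsub hy).2
  have hetop : e ≠ ⊤ := partDens_ne_top hM hV hD ht
  have hrN1 : 1 ≤ er N W := one_le_er_contract hV hpre hWsub hy hycl
  have hrNtop : er N W ≠ ⊤ := er_contract_ne_top hWE
  have hane : (W.encard : ℝ≥0∞) ≠ ⊤ := toENNReal_ne_top (encard_ne_top hWE)
  have hae : (W.encard : ℝ≥0∞) = e * ↑(er N W) := by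
    rw [he, dens, ENNReal.div_mul_cancel (toENNReal_ne_zero hrN1) (toENNReal_ne_top hrNtop)]
  set W1 := W ∩ M.closure Z' with hW1def
  set W2 := W \ M.closure Z' with hW2def
  obtain ⟨-, hmax, -⟩ := hD.densest t ht
  -- |W1| ≤ e * er N W1
  have hW1bound : (W1.encard : ℝ≥0∞) ≤ e * ↑(er N W1) := by
    by_cases hW1 : W1 = ∅
    · rw [hW1, encard_empty]; simp
    · obtain ⟨y1, hy1⟩ := nonempty_iff_ne_empty.mpr hW1
      have hy1W : y1 ∈ W := hy1.1
      have hW1sub : W1 ⊆ V'' \ pre U t := (inter_subset_left).trans hWsub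
      have h1 : 1 ≤ er N W1 :=
        one_le_er_contract hV hpre hW1sub hy1
          (decomp_closed hM hV hD t ht.le y1 (hWsub hy1W).1 (hWsub hy1W).2)
      have hd : dens N W1 ≤ e := by
        apply hmax
        rw [contract_ground, restrict_ground_eq]
        exact hW1sub
      rw [dens] at hd
      exact (ENNReal.div_le_iff_le_mul (Or.inl (toENNReal_ne_zero h1))
        (Or.inl (toENNReal_ne_top (er_contract_ne_top ((hW1sub.trans diff_subset).trans hV))))).mp hd
  -- submodularity / diminishing returns
  have hsub1 : (W ∪ pre U t) ∪ (W1 ∪ Z') = W ∪ Z' := by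
    apply subset_antisymm
    · exact union_subset (union_subset subset_union_left (hPZ.trans subset_union_right))
        (union_subset ((inter_subset_left).trans subset_union_left) subset_union_right)
    · exact union_subset (subset_union_left.trans subset_union_left)
        (subset_union_right.trans subset_union_right)
  have hsub2 : W1 ∪ pre U t ⊆ (W ∪ pre U t) ∩ (W1 ∪ Z') :=
    union_subset (subset_inter ((inter_subset_left).trans subset_union_left) subset_union_left)
      (subset_inter subset_union_right (hPZ.trans subset_union_right))
  have hWZE : W ∪ Z' ⊆ M.E := union_subset hWE hZ'
  have hdim : er M (W ∪ Z') + er M (W1 ∪ pre U t) ≤ er M (W ∪ pre U t) + er M Z' := by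
    have h0 := er_submod (M := M) (X := W ∪ pre U t) (Y := W1 ∪ Z')
      (union_subset hWE (hpre.trans hV))
      (union_subset ((inter_subset_left).trans hWE) hZ')
    rw [hsub1] at h0
    have h1 : er M (W1 ∪ pre U t) ≤ er M ((W ∪ pre U t) ∩ (W1 ∪ Z')) := er_mono hsub2
    have h2 : er M (W1 ∪ Z') = er M Z' := by
      rw [union_comm]
      exact er_union_eq_of_subset_closure hZ' (inter_subset_right)
    calc er M (W ∪ Z') + er M (W1 ∪ pre U t)
        ≤ er M (W ∪ Z') + er M ((W ∪ pre U t) ∩ (W1 ∪ Z')) := add_le_add_right h1 _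
      _ ≤ er M (W ∪ pre U t) + er M (W1 ∪ Z') := h0
      _ = er M (W ∪ pre U t) + er M Z' := by rw [h2]
  -- translate to contracted ranks
  have htr1 : er N W + er M (pre U t) = er M (W ∪ pre U t) :=
    er_contract_restrict hV hpre hWsub
  have htr2 : er N W1 + er M (pre U t) = er M (W1 ∪ pre U t) :=
    er_contract_restrict hV hpre ((inter_subset_left).trans hWsub)
  -- key ℕ∞ inequality
  have hkey : er M (W ∪ Z') + er N W1 ≤ er N W + er M Z' := by
    have f1 : er M (pre U t) ≠ ⊤ := er_ne_top
    rw [← htr1, ← htr2] at hdim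
    have hh : (er M (W ∪ Z') + er N W1) + er M (pre U t)
        ≤ (er N W + er M Z') + er M (pre U t) := by
      calc (er M (W ∪ Z') + er N W1) + er M (pre U t)
          = er M (W ∪ Z') + (er N W1 + er M (pre U t)) := by ring
        _ ≤ (er N W + er M (pre U t)) + er M Z' := hdim
        _ = (er N W + er M Z') + er M (pre U t) := by ring
    exact (WithTop.add_le_add_iff_right f1).mp hh
  -- delta decomposition
  set dlt := er M (W ∪ Z') - er M Z' with hdlt
  have hdelta : er M (W ∪ Z') = er M Z' + dlt :=
    (add_tsub_cancel_of_le (er_mono subset_union_right)).symm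
  have hdkey : dlt + er N W1 ≤ er N W := by
    have f2 : er M Z' ≠ ⊤ := er_ne_top
    rw [hdelta] at hkey
    have hh : (dlt + er N W1) + er M Z' ≤ er N W + er M Z' := by
      calc (dlt + er N W1) + er M Z' = (er M Z' + dlt) + er N W1 := by ring
        _ ≤ er N W + er M Z' := hkey
    exact (WithTop.add_le_add_iff_right f2).mp hh
  -- e * er N W ≤ |W2| + e * er N W1
  have hcards : (W2.encard : ℝ≥0∞) + (W1.encard : ℝ≥0∞) = (W.encard : ℝ≥0∞) := by
    rw [← ENat.toENNReal_add]
    congr 1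
    exact encard_diff_add_encard_inter W (M.closure Z')
  have halpha : e * ↑(er N W) ≤ ↑(W2.encard) + e * ↑(er N W1) := by
    calc e * ↑(er N W) = ↑(W.encard) := hae.symm
      _ = ↑(W2.encard) + ↑(W1.encard) := hcards.symm
      _ ≤ ↑(W2.encard) + e * ↑(er N W1) := add_le_add_right hW1bound _
  have hW1top : (↑(er N W1) : ℝ≥0∞) ≠ ⊤ :=
    toENNReal_ne_top (er_contract_ne_top ((inter_subset_left).trans hWE))
  have heW1top : e * ↑(er N W1) ≠ ⊤ := ENNReal.mul_ne_top hetop hW1top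
  have hedlt : e * ↑dlt ≤ ↑(W2.encard) := by
    have h1 : e * (↑dlt + ↑(er N W1)) ≤ e * ↑(er N W) := by
      apply mul_le_mul_right
      rw [← ENat.toENNReal_add]
      exact ENat.toENNReal_le.mpr hdkey
    rw [mul_add] at h1
    have h2 : e * ↑dlt + e * ↑(er N W1) ≤ ↑(W2.encard) + e * ↑(er N W1) :=
      h1.trans halpha
    exact (ENNReal.add_le_add_iff_right heW1top).mp h2
  -- conclude
  calc lam * ↑(er M (W ∪ Z')) = lam * (↑(er M Z') + ↑dlt) := by
        rw [hdelta, ENat.toENNReal_add]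
    _ = lam * ↑(er M Z') + lam * ↑dlt := by rw [mul_add]
    _ ≤ lam * ↑(er M Z') + e * ↑dlt := add_le_add_right (mul_le_mul_left hle _) _
    _ ≤ lam * ↑(er M Z') + ↑(W2.encard) := add_le_add_right hedlt _
    _ = ↑(W2.encard) + lam * ↑(er M Z') := by rw [add_comm]



/-- Key counting claim : a prefix whose parts all have density `≥ lam` cannot escape the
closure of any set `Z` too cheaply. -/
lemma claim2 [M.Finite] (hM : Loopless M) (hV : V'' ⊆ M.E)
    (hD : IsDensityDecomp (M ↾ V'') k U) {lam : ℝ≥0∞} (hlam : lam ≠ ⊤) :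
    ∀ t, t ≤ k → (∀ s, s < t → lam ≤ dens (contract (M ↾ V'') (pre U s)) (U s)) →
    ∀ Z, Z ⊆ M.E →
    lam * ↑(er M (pre U t ∪ Z)) ≤ ↑((pre U t \ M.closure Z).encard) + lam * ↑(er M Z) := by
  intro t
  induction t with
  | zero =>
    intro _ _ Z hZ
    rw [pre_zero, empty_union, empty_diff, encard_empty]
    simp
  | succ t ih =>
    intro ht hdens Z hZ
    have htk : t < k := ht
    set W := U t with hWdef
    set Z' := Z ∪ pre U t with hZ'def
    have hZ'E : Z' ⊆ M.E := union_subset hZ ((decomp_pre_subset hD htk.le).trans hV)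
    have hstep := claim2_step hM hV hD hlam htk (hdens t (Nat.lt_succ_self t))
      hZ'E subset_union_right
    have hIH := ih htk.le (fun s hs => hdens s (hs.trans (Nat.lt_succ_self t))) Z hZ
    -- set identities
    have hs1 : W ∪ Z' = pre U (t+1) ∪ Z := by rw [hZ'def, pre_succ]; ac_rfl
    have hs2 : er M Z' = er M (pre U t ∪ Z) := by rw [hZ'def, union_comm]
    have hdisj : Disjoint (pre U t \ M.closure Z) (W \ M.closure Z) := by
      refine disjoint_left.mpr fun x hx hx2 => ?_
      exact ((decomp_part_subset hD htk) hx2.1).2 hx.1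
    have hs3 : (pre U (t+1) \ M.closure Z) = (pre U t \ M.closure Z) ∪ (W \ M.closure Z) := by
      rw [pre_succ, union_diff_distrib]
    have hcards : ((pre U (t+1) \ M.closure Z).encard : ℝ≥0∞)
        = ↑((pre U t \ M.closure Z).encard) + ↑((W \ M.closure Z).encard) := by
      rw [hs3, encard_union_eq hdisj, ENat.toENNReal_add]
    have hmono : ((W \ M.closure Z').encard : ℝ≥0∞) ≤ ↑((W \ M.closure Z).encard) := by
      refine ENat.toENNReal_le.mpr (encard_mono fun x hx => ⟨hx.1, fun hc => hx.2 ?_⟩)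
      exact M.closure_subset_closure subset_union_left hc
    calc lam * ↑(er M (pre U (t+1) ∪ Z)) = lam * ↑(er M (W ∪ Z')) := by rw [hs1]
      _ ≤ ↑((W \ M.closure Z').encard) + lam * ↑(er M Z') := hstep
      _ = ↑((W \ M.closure Z').encard) + lam * ↑(er M (pre U t ∪ Z)) := by rw [hs2]
      _ ≤ ↑((W \ M.closure Z').encard) + (↑((pre U t \ M.closure Z).encard) + lam * ↑(er M Z)) :=
          add_le_add_right hIH _
      _ ≤ ↑((W \ M.closure Z).encard) + (↑((pre U t \ M.closure Z).encard) + lam * ↑(er M Z)) :=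
          add_le_add_left hmono _
      _ = ↑((pre U (t+1) \ M.closure Z).encard) + lam * ↑(er M Z) := by
          rw [hcards]; ring


end densityLemmas

section main

variable {M : Matroid α} {V' : Set α} {u v : α} {k : ℕ} {Uold Unew : ℕ → Set α}

lemma main_le [M.Finite] (hM : Loopless M) (hV' : V' ⊆ M.E)
    (hold : IsDensityDecomp (M ↾ V') k Uold)
    (hnew : IsDensityDecomp (M ↾ (V' \ {u})) k Unew) (v : α) (hv : v ∈ M.E) :
    assocDens M (V' \ {u}) k Unew v ≤ assocDens M V' k Uold v := by
  classical
  unfold assocDens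
  by_cases hex : ∃ j, j < k ∧ v ∈ M.closure (pre Unew (j + 1))
  swap
  · rw [dif_neg hex]; exact zero_le
  rw [dif_pos hex]
  obtain ⟨hj'k, hj'cl⟩ := Nat.find_spec hex
  set j' := Nat.find hex with hj'def
  set lam := dens (contract (M ↾ (V' \ {u})) (pre Unew j')) (Unew j') with hlamdef
  show lam ≤ _
  rcases eq_or_ne lam 0 with hlam0 | hlam0
  · rw [hlam0]; exact zero_le
  have hVnew : V' \ {u} ⊆ M.E := diff_subset.trans hV'
  have hlamtop : lam ≠ ⊤ := partDens_ne_top hM hVnew hnew hj'k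
  set P : ℕ → Prop := fun m => ∀ s, s < m → lam ≤ dens (contract (M ↾ V') (pre Uold s)) (Uold s)
    with hPdef
  have hP0 : P 0 := fun s hs => absurd hs (Nat.not_lt_zero s)
  set m := Nat.findGreatest P k with hmdef
  have hmk : m ≤ k := Nat.findGreatest_le k
  have hmspec : P m := Nat.findGreatest_spec (Nat.zero_le k) hP0
  have hmgt : m < k → dens (contract (M ↾ V') (pre Uold m)) (Uold m) < lam := by
    intro hmk'
    have h := Nat.findGreatest_is_greatest (Nat.lt_succ_self m) hmk'
    simp only [hPdef] at h
    push_neg at h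
    obtain ⟨s, hs, hslt⟩ := h
    exact lt_of_le_of_lt (partDens_anti hM hV' hold (by omega) hmk') hslt
  have hZ : pre Uold m ⊆ M.E := (decomp_pre_subset hold hmk).trans hV'
  have hdens' : ∀ s, s < j' + 1 →
      lam ≤ dens (contract (M ↾ (V' \ {u})) (pre Unew s)) (Unew s) := fun s hs =>
    partDens_anti hM hVnew hnew (by omega) hj'k
  have hc2 := claim2 hM hVnew hnew hlamtop (j' + 1) hj'k hdens' (pre Uold m) hZ
  set Q := pre Unew (j' + 1) with hQdef
  set Y := Q \ M.closure (pre Uold m) with hYdef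
  have hQsub : Q ⊆ V' \ {u} := decomp_pre_subset hnew hj'k
  have hYempty : Y = ∅ := by
    by_contra hne
    obtain ⟨y, hy⟩ := nonempty_iff_ne_empty.mpr hne
    have hmk' : m < k := by
      rcases lt_or_ge m k with h | h
      · exact h
      · exfalso
        have hmeq : m = k := le_antisymm hmk h
        have hPm : pre Uold m = V' := by rw [hmeq, hold.cover, restrict_ground_eq]
        refine hy.2 ?_
        rw [hPm]
        exact M.subset_closure V' hV' ((hQsub hy.1).1)
    have hdm := hmgt hmk'
    obtain ⟨-, hmaxm, -⟩ := hold.densest m hmk'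
    have hYsub : Y ⊆ V' \ pre Uold m := fun x hx =>
      ⟨(hQsub hx.1).1, fun hc => hx.2 (M.subset_closure _ hZ hc)⟩
    have hycl : y ∉ M.closure (pre Uold m) := hy.2
    set Nm := contract (M ↾ V') (pre Uold m) with hNmdef
    have hNm : er Nm Y + er M (pre Uold m) = er M (Y ∪ pre Uold m) :=
      er_contract_restrict hV' (decomp_pre_subset hold hmk'.le) hYsub
    have hercl : er M (Y ∪ pre Uold m) = er M (Q ∪ pre Uold m) := by
      have h1 : er M ((Y ∪ pre Uold m) ∪ (Q ∩ M.closure (pre Uold m)))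
          = er M (Y ∪ pre Uold m) := by
        refine er_union_eq_of_subset_closure
          (union_subset ((hYsub.trans diff_subset).trans hV') hZ) ?_
        refine (inter_subset_right).trans (M.closure_subset_closure subset_union_right)
      have h2 : (Y ∪ pre Uold m) ∪ (Q ∩ M.closure (pre Uold m)) = Q ∪ pre Uold m := by
        apply subset_antisymm
        · exact union_subset (union_subset (diff_subset.trans subset_union_left)
            subset_union_right) ((inter_subset_left).trans subset_union_left)
        · rintro x (hx | hx)
          · by_cases hc : x ∈ M.closure (pre Uold m)
            · exact Or.inr ⟨hx, hc⟩
            · exact Or.inl (Or.inl ⟨hx, hc⟩)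
          · exact Or.inl (Or.inr hx)
      rw [h2] at h1
      exact h1.symm
    have h1 : 1 ≤ er Nm Y :=
      one_le_er_contract hV' (decomp_pre_subset hold hmk'.le) hYsub hy hycl
    have herY : (er Nm Y : ℝ≥0∞) ≠ ⊤ :=
      toENNReal_ne_top (er_contract_ne_top ((hYsub.trans diff_subset).trans hV'))
    have hlamP : lam * ↑(er M (pre Uold m)) ≠ ⊤ :=
      ENNReal.mul_ne_top hlamtop (toENNReal_ne_top (er_ne_top (M := M)))
    have hkey : lam * ↑(er Nm Y) ≤ ↑(Y.encard) := by
      have hc2' : lam * (↑(er Nm Y) + ↑(er M (pre Uold m)))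
          ≤ ↑(Y.encard) + lam * ↑(er M (pre Uold m)) := by
        rw [← ENat.toENNReal_add, hNm, hercl]
        exact hc2
      rw [mul_add] at hc2'
      exact (ENNReal.add_le_add_iff_right hlamP).mp hc2'
    have hld : lam ≤ dens Nm Y := by
      rw [dens]
      exact (ENNReal.le_div_iff_mul_le (Or.inl (toENNReal_ne_zero h1)) (Or.inl herY)).mpr hkey
    have hdd : dens Nm Y ≤ dens Nm (Uold m) := by
      apply hmaxm
      rw [hNmdef, contract_ground, restrict_ground_eq]
      exact hYsub
    exact absurd ((hld.trans hdd).trans_lt hdm) (lt_irrefl lam)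
  have hQcl : Q ⊆ M.closure (pre Uold m) := fun x hx => by
    by_contra hc
    exact (eq_empty_iff_forall_notMem.mp hYempty x) ⟨hx, hc⟩
  have hvPm : v ∈ M.closure (pre Uold m) :=
    M.closure_subset_closure_of_subset_closure hQcl hj'cl
  have hm1 : 1 ≤ m := by
    by_contra h
    have h0 : m = 0 := by omega
    rw [h0, pre_zero] at hvPm
    exact not_mem_closure_empty hM hv hvPm
  have hexold : ∃ j, j < k ∧ v ∈ M.closure (pre Uold (j + 1)) :=
    ⟨m - 1, by omega, by rw [show m - 1 + 1 = m by omega]; exact hvPm⟩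
  rw [dif_pos hexold]
  have hj0 : Nat.find hexold ≤ m - 1 := Nat.find_le ⟨by omega, by
    rw [show m - 1 + 1 = m by omega]; exact hvPm⟩
  have h1 : lam ≤ dens (contract (M ↾ V') (pre Uold (m - 1))) (Uold (m - 1)) :=
    hmspec (m - 1) (by omega)
  exact h1.trans (partDens_anti hM hV' hold hj0 (by omega))

lemma main_lower [M.Finite] (hM : Loopless M) (hV' : V' ⊆ M.E) (hu : u ∈ V')
    (hold : IsDensityDecomp (M ↾ V') k Uold)
    (hnew : IsDensityDecomp (M ↾ (V' \ {u})) k Unew) :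
    assocDens M V' k Uold u - 1 ≤ assocDens M (V' \ {u}) k Unew u := by
  classical
  have huE : u ∈ M.E := hV' hu
  have hVnew : V' \ {u} ⊆ M.E := diff_subset.trans hV'
  have hk1 : 1 ≤ k := by
    by_contra h
    have hk0 : k = 0 := by omega
    have := hold.cover
    rw [hk0, pre_zero, restrict_ground_eq] at this
    rw [← this] at hu
    exact hu
  have hclV : u ∈ M.closure (pre Uold k) := by
    rw [hold.cover, restrict_ground_eq]
    exact M.subset_closure V' hV' hu
  have hexold : ∃ j, j < k ∧ u ∈ M.closure (pre Uold (j + 1)) :=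
    ⟨k - 1, by omega, by rw [show k - 1 + 1 = k by omega]; exact hclV⟩
  unfold assocDens
  rw [dif_pos hexold]
  obtain ⟨hik, hicl⟩ := Nat.find_spec hexold
  set i := Nat.find hexold with hidef
  set d := dens (contract (M ↾ V') (pre Uold i)) (Uold i) with hddef
  rcases le_or_gt d 1 with hd1 | hd1
  · rw [tsub_eq_zero_of_le hd1]
    exact zero_le
  have hdtop : d ≠ ⊤ := partDens_ne_top hM hV' hold hik
  -- (a) u belongs to the part `Uold i`
  have hupre : u ∉ pre Uold i := by
    intro hc
    have hi1 : 1 ≤ i := by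
      by_contra h
      have h0 : i = 0 := by omega
      rw [h0, pre_zero] at hc
      exact hc
    refine Nat.find_min hexold (show i - 1 < i by omega) ⟨by omega, ?_⟩
    rw [show i - 1 + 1 = i by omega]
    exact M.subset_closure _ ((decomp_pre_subset hold hik.le).trans hV') hc
  have huUi : u ∈ Uold i := by
    have h1 : u ∈ pre Uold (i + 1) := by
      by_contra hc
      exact decomp_closed hM hV' hold (i + 1) hik u hu hc hicl
    rw [pre_succ] at h1
    rcases h1 with h | h
    · exact absurd h hupre
    · exact h
  have hWsub : Uold i ⊆ V' \ pre Uold i := decomp_part_subset hold hik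
  have hpreE : pre Uold i ⊆ M.E := (decomp_pre_subset hold hik.le).trans hV'
  set A := (Uold i \ {u}) ∪ pre Uold i with hAdef
  have hAE : A ⊆ M.E :=
    union_subset ((diff_subset.trans (hWsub.trans diff_subset)).trans hV') hpreE
  -- (b) u is spanned by the rest of its part together with the prefix
  have hucl : u ∈ M.closure A := by
    by_contra hcon
    have hins : er M (insert u A) = er M A + 1 :=
      er_insert_of_not_mem_closure hAE huE hcon
    have hsA : insert u A = Uold i ∪ pre Uold i := by
      apply subset_antisymm
      · intro x hx
        rcases hx with rfl | hx
        · exact Or.inl huUi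
        · rcases hx with hx | hx
          · exact Or.inl hx.1
          · exact Or.inr hx
      · rintro x (hx | hx)
        · rcases eq_or_ne x u with rfl | hne
          · exact mem_insert _ _
          · exact mem_insert_of_mem _ (Or.inl ⟨hx, hne⟩)
        · exact mem_insert_of_mem _ (Or.inr hx)
    set N := contract (M ↾ V') (pre Uold i) with hNdef
    have hW'sub : Uold i \ {u} ⊆ V' \ pre Uold i := diff_subset.trans hWsub
    have htr1 : er N (Uold i \ {u}) + er M (pre Uold i) = er M A :=
      er_contract_restrict hV' (decomp_pre_subset hold hik.le) hW'sub
    have htr2 : er N (Uold i) + er M (pre Uold i) = er M (Uold i ∪ pre Uold i) :=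
      er_contract_restrict hV' (decomp_pre_subset hold hik.le) hWsub
    have hNstep : er N (Uold i) = er N (Uold i \ {u}) + 1 := by
      rw [← hsA, hins, ← htr1] at htr2
      have htr2' : er N (Uold i) + er M (pre Uold i)
          = (er N (Uold i \ {u}) + 1) + er M (pre Uold i) := by
        rw [htr2]; ring
      exact WithTop.add_right_cancel (er_ne_top (M := M)) htr2'
    have hcard : (Uold i).encard = (Uold i \ {u}).encard + 1 :=
      (encard_diff_singleton_add_one huUi).symm
    obtain ⟨-, hmax, -⟩ := hold.densest i hik
    have hdW' : dens N (Uold i \ {u}) ≤ d := by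
      apply hmax
      rw [contract_ground, restrict_ground_eq]
      exact hW'sub
    set a' := ((Uold i \ {u}).encard : ℝ≥0∞) with ha'
    set s' := ((er N (Uold i \ {u}) : ℕ∞) : ℝ≥0∞) with hs'
    have hs'top : s' ≠ ⊤ :=
      toENNReal_ne_top (er_contract_ne_top ((hW'sub.trans diff_subset).trans hV'))
    have ha'top : a' ≠ ⊤ :=
      toENNReal_ne_top (encard_ne_top ((hW'sub.trans diff_subset).trans hV'))
    have hdmul : d * (s' + 1) = a' + 1 := by
      have h1 : ((Uold i).encard : ℝ≥0∞) = a' + 1 := by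
        rw [hcard, ENat.toENNReal_add, ENat.toENNReal_one]
      have h2 : ((er N (Uold i) : ℕ∞) : ℝ≥0∞) = s' + 1 := by
        rw [hNstep, ENat.toENNReal_add, ENat.toENNReal_one]
      rw [hddef, dens, h1, h2]
      exact ENNReal.div_mul_cancel (by
          intro hc
          rw [add_eq_zero] at hc
          exact one_ne_zero hc.2)
        (ENNReal.add_ne_top.mpr ⟨hs'top, ENNReal.one_ne_top⟩)
    have hle1 : a' ≤ d * s' := by
      have h3 : a' / s' ≤ d := by rw [ha', hs']; exact hdW'
      exact (ENNReal.div_le_iff_le_mul (Or.inr hdtop) (Or.inl hs'top)).mp h3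
    have hle2 : a' + d ≤ a' + 1 := by
      calc a' + d ≤ d * s' + d := add_le_add_left hle1 d
        _ = d * (s' + 1) := by ring
        _ = a' + 1 := hdmul
    have : d ≤ 1 := (ENNReal.add_le_add_iff_left ha'top).mp hle2
    exact absurd hd1 (not_lt.mpr this)
  -- (c) mirror argument
  set P2 : ℕ → Prop := fun m => ∀ s, s < m →
    d - 1 ≤ dens (contract (M ↾ (V' \ {u})) (pre Unew s)) (Unew s) with hP2def
  have hP20 : P2 0 := fun s hs => absurd hs (Nat.not_lt_zero s)
  set m' := Nat.findGreatest P2 k with hm'def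
  have hm'k : m' ≤ k := Nat.findGreatest_le k
  have hm'spec : P2 m' := Nat.findGreatest_spec (Nat.zero_le k) hP20
  have hm'gt : m' < k →
      dens (contract (M ↾ (V' \ {u})) (pre Unew m')) (Unew m') < d - 1 := by
    intro hmk'
    have h := Nat.findGreatest_is_greatest (Nat.lt_succ_self m') hmk'
    simp only [hP2def] at h
    push_neg at h
    obtain ⟨s, hs, hslt⟩ := h
    exact lt_of_le_of_lt (partDens_anti hM hVnew hnew (by omega) hmk') hslt
  set T := pre Unew m' with hTdef
  have hTE : T ⊆ M.E := (decomp_pre_subset hnew hm'k).trans hVnew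
  have hdens_old : ∀ s, s < i + 1 →
      d ≤ dens (contract (M ↾ V') (pre Uold s)) (Uold s) := fun s hs =>
    partDens_anti hM hV' hold (by omega) hik
  have hc2 := claim2 hM hV' hold hdtop (i + 1) hik hdens_old T hTE
  set Q := pre Uold (i + 1) with hQdef
  set Y := Q \ M.closure T with hYdef
  have hQsub : Q ⊆ V' := decomp_pre_subset hold hik
  have hYempty : Y \ {u} = ∅ := by
    by_contra hne
    obtain ⟨w, hw⟩ := nonempty_iff_ne_empty.mpr hne
    have hwQ : w ∈ Q := hw.1.1
    have hwcl : w ∉ M.closure T := hw.1.2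
    have hwu : w ≠ u := hw.2
    have hmk' : m' < k := by
      rcases lt_or_ge m' k with h | h
      · exact h
      · exfalso
        have hmeq : m' = k := le_antisymm hm'k h
        have hTm : T = V' \ {u} := by rw [hTdef, hmeq, hnew.cover, restrict_ground_eq]
        refine hwcl ?_
        rw [hTm]
        exact M.subset_closure _ hVnew ⟨hQsub hwQ, hwu⟩
    have hdm := hm'gt hmk'
    obtain ⟨-, hmaxm, -⟩ := hnew.densest m' hmk'
    set Y2 := Y \ {u} with hY2def
    have hY2sub : Y2 ⊆ (V' \ {u}) \ T := fun x hx =>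
      ⟨⟨hQsub hx.1.1, hx.2⟩, fun hc => hx.1.2 (M.subset_closure _ hTE hc)⟩
    set Nn := contract (M ↾ (V' \ {u})) T with hNndef
    have hNn : er Nn Y2 + er M T = er M (Y2 ∪ T) :=
      er_contract_restrict hVnew (decomp_pre_subset hnew hm'k) hY2sub
    have h1 : 1 ≤ er Nn Y2 :=
      one_le_er_contract hVnew (decomp_pre_subset hnew hm'k) hY2sub
        ⟨hw.1, hwu⟩ hwcl
    -- er (Y ∪ T) = er (Q ∪ T)
    have hercl : er M (Y ∪ T) = er M (Q ∪ T) := by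
      have h2 : er M ((Y ∪ T) ∪ (Q ∩ M.closure T)) = er M (Y ∪ T) := by
        refine er_union_eq_of_subset_closure
          (union_subset ((diff_subset.trans hQsub).trans hV') hTE) ?_
        exact (inter_subset_right).trans (M.closure_subset_closure subset_union_right)
      have h3 : (Y ∪ T) ∪ (Q ∩ M.closure T) = Q ∪ T := by
        apply subset_antisymm
        · exact union_subset (union_subset (diff_subset.trans subset_union_left)
            subset_union_right) ((inter_subset_left).trans subset_union_left)
        · rintro x (hx | hx)
          · by_cases hc : x ∈ M.closure T
            · exact Or.inr ⟨hx, hc⟩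
            · exact Or.inl (Or.inl ⟨hx, hc⟩)
          · exact Or.inl (Or.inr hx)
      rw [h3] at h2
      exact h2.symm
    have hcardY : (Y.encard : ℝ≥0∞) ≤ ↑(Y2.encard) + 1 := by
      have : Y ⊆ insert u Y2 := fun x hx => by
        rcases eq_or_ne x u with rfl | hne
        · exact mem_insert _ _
        · exact mem_insert_of_mem _ ⟨hx, hne⟩
      calc (Y.encard : ℝ≥0∞) ≤ ((insert u Y2).encard : ℝ≥0∞) :=
            ENat.toENNReal_le.mpr (encard_mono this)
        _ ≤ ↑(Y2.encard + 1) := ENat.toENNReal_le.mpr (encard_insert_le _ _)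
        _ = ↑(Y2.encard) + 1 := by rw [ENat.toENNReal_add, ENat.toENNReal_one]
    have hdT : d * ↑(er M T) ≠ ⊤ :=
      ENNReal.mul_ne_top hdtop (toENNReal_ne_top (er_ne_top (M := M)))
    have hkey : d * ↑(er Nn Y2) ≤ ↑(Y2.encard) + 1 := by
      have hch : d * (↑(er Nn Y2) + ↑(er M T)) ≤ (↑(Y2.encard) + 1) + d * ↑(er M T) := by
        calc d * (↑(er Nn Y2) + ↑(er M T)) = d * ↑(er M (Y2 ∪ T)) := by
              rw [← ENat.toENNReal_add, hNn]
          _ ≤ d * ↑(er M (Y ∪ T)) := by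
              apply mul_le_mul_right
              exact ENat.toENNReal_le.mpr (er_mono (union_subset_union_left T diff_subset))
          _ = d * ↑(er M (Q ∪ T)) := by rw [hercl]
          _ ≤ ↑(Y.encard) + d * ↑(er M T) := hc2
          _ ≤ (↑(Y2.encard) + 1) + d * ↑(er M T) := add_le_add_left hcardY _
      rw [mul_add] at hch
      exact (ENNReal.add_le_add_iff_right hdT).mp hch
    have hkey2 : (d - 1) * ↑(er Nn Y2) ≤ ↑(Y2.encard) := by
      have hr1 : (1 : ℝ≥0∞) ≤ ↑(er Nn Y2) := by
        rw [← ENat.toENNReal_one]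
        exact ENat.toENNReal_le.mpr h1
      have hd' : (d - 1) + 1 = d := tsub_add_cancel_of_le hd1.le
      have hch : (d - 1) * ↑(er Nn Y2) + 1 ≤ ↑(Y2.encard) + 1 := by
        calc (d - 1) * ↑(er Nn Y2) + 1
            ≤ (d - 1) * ↑(er Nn Y2) + 1 * ↑(er Nn Y2) := by
              exact add_le_add_right (by rw [one_mul]; exact hr1) _
          _ = ((d - 1) + 1) * ↑(er Nn Y2) := by ring
          _ = d * ↑(er Nn Y2) := by rw [hd']
          _ ≤ ↑(Y2.encard) + 1 := hkey
      exact (ENNReal.add_le_add_iff_right ENNReal.one_ne_top).mp hch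
    have herY2top : (↑(er Nn Y2) : ℝ≥0∞) ≠ ⊤ :=
      toENNReal_ne_top (er_contract_ne_top ((hY2sub.trans diff_subset).trans hVnew))
    have hld : d - 1 ≤ dens Nn Y2 := by
      rw [dens]
      exact (ENNReal.le_div_iff_mul_le (Or.inl (toENNReal_ne_zero h1))
        (Or.inl herY2top)).mpr hkey2
    have hdd : dens Nn Y2 ≤ dens Nn (Unew m') := by
      apply hmaxm
      rw [hNndef, contract_ground, restrict_ground_eq]
      exact hY2sub
    exact absurd ((hld.trans hdd).trans_lt hdm) (lt_irrefl _)
  -- conclude : u ∈ closure T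
  have hAsubY : A ⊆ M.closure T := by
    intro x hx
    by_contra hc
    have hxQ : x ∈ Q := by
      rw [hQdef, pre_succ]
      rcases hx with hx | hx
      · exact Or.inr hx.1
      · exact Or.inl hx
    have hxu : x ≠ u := by
      rcases hx with hx | hx
      · exact hx.2
      · exact fun h => hupre (h ▸ hx)
    exact (eq_empty_iff_forall_notMem.mp hYempty x) ⟨⟨hxQ, hc⟩, hxu⟩
  have huclT : u ∈ M.closure T :=
    M.closure_subset_closure_of_subset_closure hAsubY hucl
  have hm'1 : 1 ≤ m' := by
    by_contra h
    have h0 : m' = 0 := by omega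
    rw [hTdef, h0, pre_zero] at huclT
    exact not_mem_closure_empty hM huE huclT
  have hexnew : ∃ j, j < k ∧ u ∈ M.closure (pre Unew (j + 1)) :=
    ⟨m' - 1, by omega, by rw [show m' - 1 + 1 = m' by omega]; exact huclT⟩
  rw [dif_pos hexnew]
  have hj1 : Nat.find hexnew ≤ m' - 1 := Nat.find_le ⟨by omega, by
    rw [show m' - 1 + 1 = m' by omega]; exact huclT⟩
  have h1 : d - 1 ≤ dens (contract (M ↾ (V' \ {u})) (pre Unew (m' - 1))) (Unew (m' - 1)) :=
    hm'spec (m' - 1) (by omega)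
  exact h1.trans (partDens_anti hM hVnew hnew hj1 (by omega))

end main

/-- deleting an element can only decrease associated densities, and the
associated density of the deleted element decreases by at most 1. -/
theorem assocDens_delete (M : Matroid α) [M.Finite] (hM : Loopless M)
    (V' : Set α) (hV' : V' ⊆ M.E) (u : α) (hu : u ∈ V') (k : ℕ)
    (Uold Unew : ℕ → Set α)
    (hold : IsDensityDecomp (M ↾ V') k Uold)
    (hnew : IsDensityDecomp (M ↾ (V' \ {u})) k Unew) :
    (∀ v ∈ M.E, assocDens M (V' \ {u}) k Unew v ≤ assocDens M V' k Uold v) ∧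
      assocDens M V' k Uold u - 1 ≤ assocDens M (V' \ {u}) k Unew u ∧
      assocDens M (V' \ {u}) k Unew u ≤ assocDens M V' k Uold u := by
  exact ⟨fun v hv => main_le hM hV' hold hnew v hv,
    main_lower hM hV' hu hold hnew,
    main_le hM hV' hold hnew u (hV' hu)⟩

end MatroidDCS
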